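/- arXiv:1203.4700 — 2 statements merged into one kernel-verified Lean document; each statement's English description precedes it below -/
import Mathlib

section
/- Let A(t) : D ⊂ X → X be closed operators with common dense domain D and bounded inverses A(t)⁻¹ ∈ L(X), and suppose t ↦ A(t)x is continuously differentiable for each x ∈ D with derivative Ȧ(t)x. Then for every x ∈ X the map (s,t) ↦ (1/(t−s))·(A(t)A(s)⁻¹ − 1)x, defined for s ≠ t, extends to a continuous map on [0,1]², given on the diagonal by (t,t) ↦ Ȧ(t)A(t)⁻¹x; in particular it is bounded and uniformly continuous on {(s,t) : s ≠ t}. -/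
open Set Filter Topology
open scoped NNReal

/-!
Write `T t s = A t (A s)⁻¹`. By the closed graph theorem each `T t s` is bounded, and for fixed `s`
each orbit `u ↦ T u s z` is C¹, hence Lipschitz, so by Banach–Steinhaus `u ↦ T u s` is Lipschitz
in operator norm. As `T s₀ s = (T s s₀)⁻¹` and `T s s₀ → 1`, also `T s₀ s → 1`. Now
`Ȧ τ (A s)⁻¹ x - Ȧ τ (A s₀)⁻¹ x` is the derivative at `τ` of `u ↦ T u s₀ (T s₀ s x - x)`, so it is
bounded by `K ‖T s₀ s x - x‖` uniformly in `τ`, and `g (τ, s) = Ȧ τ (A s)⁻¹ x` is jointly continuous.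
By the fundamental theorem of calculus the difference quotient is `∫₀¹ g (s + θ (t - s), s) dθ`,
which is continuous on the whole square with value `g (t, t)` on the diagonal; boundedness and
uniform continuity then follow from compactness.
-/

theorem continuousWithinAt_of_norm_sub_le {α β E : Type*} [TopologicalSpace α]
    [TopologicalSpace β] [SeminormedAddCommGroup E] {g : α × β → E} {s : Set α} {t : Set β}
    {a : α} {b : β} {φ : β → ℝ}
    (hbound : ∀ x ∈ s, ∀ y ∈ t, ‖g (x, y) - g (x, b)‖ ≤ φ y)
    (hφ : Tendsto φ (𝓝[t] b) (𝓝 0)) (hg : ContinuousWithinAt (fun x => g (x, b)) s a) :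
    ContinuousWithinAt g (s ×ˢ t) (a, b) := by
  rw [ContinuousWithinAt, tendsto_iff_norm_sub_tendsto_zero, nhdsWithin_prod_eq]
  have hg' := (tendsto_iff_norm_sub_tendsto_zero.1 hg).comp (tendsto_fst (g := 𝓝[t] b))
  have := (hφ.comp (tendsto_snd (f := 𝓝[s] a))).add hg'
  rw [add_zero] at this
  refine squeeze_zero_norm' ?_ this
  filter_upwards [prod_mem_prod self_mem_nhdsWithin self_mem_nhdsWithin] with ⟨x, y⟩ ⟨hx, hy⟩
  rw [norm_norm]
  calc ‖g (x, y) - g (a, b)‖ ≤ ‖g (x, y) - g (x, b)‖ + ‖g (x, b) - g (a, b)‖ :=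
        norm_sub_le_norm_sub_add_norm_sub _ _ _
    _ ≤ _ := add_le_add_left (hbound x hx y hy) _

section

variable {E : Type*} [NormedAddCommGroup E] [NormedSpace ℝ E]

theorem HasDerivWithinAt.norm_le_of_lipschitzOnWith {f : ℝ → E} {f' : E} {s : Set ℝ} {x : ℝ}
    {C : ℝ≥0} (hf : HasDerivWithinAt f f' s x) (hs : UniqueDiffWithinAt ℝ s x) (hx : x ∈ s)
    (hlip : LipschitzOnWith C f s) : ‖f'‖ ≤ C := by
  have : (𝓝[s \ {x}] x).NeBot := by
    have := hs.accPt
    rwa [AccPt, nhdsWithin, inf_assoc, inf_principal, inter_comm, ← sdiff_eq] at this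
  refine le_of_tendsto (hasDerivWithinAt_iff_tendsto_slope.1 hf).norm ?_
  filter_upwards [self_mem_nhdsWithin] with y ⟨hy, hyx⟩
  rw [slope_def_module, norm_smul, norm_inv, ← dist_eq_norm, ← dist_eq_norm,
    inv_mul_le_iff₀ (dist_pos.2 hyx), mul_comm]
  exact hlip.dist_le_mul y hy x hx

theorem exists_lipschitzOnWith_of_hasDerivWithinAt {f f' : ℝ → E} {s : Set ℝ}
    (hs : Convex ℝ s) (hsc : IsCompact s) (hf : ∀ x ∈ s, HasDerivWithinAt f (f' x) s x)
    (hf' : ContinuousOn f' s) : ∃ C, LipschitzOnWith C f s := by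
  obtain ⟨C, hC⟩ := hsc.exists_bound_of_continuousOn hf'
  exact ⟨C.toNNReal, hs.lipschitzOnWith_of_nnnorm_hasDerivWithin_le hf fun x hx =>
    by simpa [← NNReal.coe_le_coe] using (hC x hx).trans (le_max_left C 0)⟩

theorem exists_lipschitzOnWith_of_forall_lipschitzOnWith_apply {α F : Type*}
    [PseudoMetricSpace α] [CompleteSpace E] [NormedAddCommGroup F] [NormedSpace ℝ F]
    {T : α → E →L[ℝ] F} {s : Set α} (h : ∀ z, ∃ C, LipschitzOnWith C (fun a => T a z) s) :
    ∃ K, LipschitzOnWith K T s := by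
  obtain ⟨M, hM⟩ := banach_steinhaus
    (g := fun p : s × s => (dist (p.1 : α) p.2)⁻¹ • (T p.1 - T p.2)) fun z => by
      obtain ⟨C, hC⟩ := h z
      refine ⟨C, fun ⟨⟨a, ha⟩, ⟨b, hb⟩⟩ => ?_⟩
      rw [smul_apply, sub_apply, norm_smul, norm_inv,
        Real.norm_of_nonneg dist_nonneg, ← dist_eq_norm]
      rcases eq_or_lt_of_le (dist_nonneg : 0 ≤ dist a b) with hab | hab
      · simp [← hab]
      · rw [inv_mul_le_iff₀ hab, mul_comm]
        exact hC.dist_le_mul a ha b hb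
  refine ⟨M.toNNReal, LipschitzOnWith.of_dist_le_mul fun a ha b hb => ?_⟩
  rcases eq_or_lt_of_le (dist_nonneg : 0 ≤ dist a b) with hab | hab
  · suffices T a = T b by simp [this, ← hab]
    ext z
    obtain ⟨C, hC⟩ := h z
    simpa [← hab] using hC.dist_le_mul a ha b hb
  · have := hM (⟨a, ha⟩, ⟨b, hb⟩)
    rw [norm_smul, norm_inv, Real.norm_of_nonneg hab.le, inv_mul_le_iff₀ hab] at this
    rw [dist_eq_norm]
    exact this.trans (by rw [mul_comm]; gcongr; exact le_max_left _ _)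

theorem slope_eq_integral_of_hasDerivWithinAt [CompleteSpace E] {f f' : ℝ → E} {a b s t : ℝ}
    (hf : ∀ τ ∈ Icc a b, HasDerivWithinAt f (f' τ) (Icc a b) τ) (hf' : ContinuousOn f' (Icc a b))
    (hs : s ∈ Icc a b) (ht : t ∈ Icc a b) (hst : s ≠ t) :
    slope f s t = ∫ θ in (0 : ℝ)..1, f' ((t - s) * θ + s) := by
  have hsub : uIcc s t ⊆ Icc a b := uIcc_subset_Icc hs ht
  have hftc : ∫ τ in s..t, f' τ = f t - f s := by
    refine intervalIntegral.integral_eq_sub_of_hasDeriv_right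
      (fun τ hτ => (hf τ (hsub hτ)).continuousWithinAt.mono hsub) (fun τ hτ => ?_)
      ((hf'.mono hsub).intervalIntegrable)
    have hτ' : τ ∈ Ioo a b := Ioo_subset_Ioo (le_min hs.1 ht.1) (max_le hs.2 ht.2) hτ
    exact ((hf τ (Ioo_subset_Icc_self hτ')).hasDerivAt (Icc_mem_nhds hτ'.1 hτ'.2)).hasDerivWithinAt
  rw [intervalIntegral.integral_comp_mul_add _ (sub_ne_zero.2 hst.symm)]
  simp [hftc, slope_def_module]

end

theorem LinearMap.continuous_comp_codRestrict_of_isClosed {X Y : Type*}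
    [NormedAddCommGroup X] [NormedSpace ℝ X] [CompleteSpace X]
    [NormedAddCommGroup Y] [NormedSpace ℝ Y] [CompleteSpace Y] {D : Submodule ℝ X}
    (L : D →ₗ[ℝ] Y) (hL : IsClosed {p : X × Y | ∃ h : p.1 ∈ D, L ⟨p.1, h⟩ = p.2})
    (R : X →L[ℝ] X) (hR : ∀ x, R x ∈ D) :
    Continuous (L ∘ₗ (R : X →ₗ[ℝ] X).codRestrict D hR) := by
  refine LinearMap.continuous_of_isClosed_graph (E := X) (F := Y) _ ?_
  convert hL.preimage ((R.continuous.comp continuous_fst).prodMk continuous_snd) using 1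
  ext ⟨x, y⟩
  simp [eq_comm, hR x]
  rfl

section

variable {X : Type*} [NormedAddCommGroup X] [NormedSpace ℝ X] [CompleteSpace X]
  {D : Submodule ℝ X} {A : ℝ → D →ₗ[ℝ] X} {R : ℝ → X →L[ℝ] X}
  (hclosed : ∀ t, IsClosed {p : X × X | ∃ h : p.1 ∈ D, A t ⟨p.1, h⟩ = p.2})
  (hmem : ∀ s x, R s x ∈ D)

def compInv (t s : ℝ) : X →L[ℝ] X :=
  ⟨A t ∘ₗ (R s : X →ₗ[ℝ] X).codRestrict D (hmem s),
    (A t).continuous_comp_codRestrict_of_isClosed (hclosed t) (R s) (hmem s)⟩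

theorem compInv_apply (t s : ℝ) (z : X) : compInv hclosed hmem t s z = A t ⟨R s z, hmem s z⟩ :=
  rfl

theorem compInv_self (hR1 : ∀ s x, A s ⟨R s x, hmem s x⟩ = x) (s : ℝ) :
    compInv hclosed hmem s s = 1 :=
  ContinuousLinearMap.ext (hR1 s)

theorem compInv_mul_compInv (hR2 : ∀ s (y : D), R s (A s y) = y) (t r s : ℝ) :
    compInv hclosed hmem t r * compInv hclosed hmem r s = compInv hclosed hmem t s := by
  ext z
  simp only [mul_apply_eq_comp, compInv_apply]
  congr 1
  exact Subtype.ext (hR2 r ⟨R s z, hmem s z⟩)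

variable {A' : ℝ → D → X} {a b : ℝ}

theorem exists_lipschitzOnWith_compInv
    (hderiv : ∀ y : D, ∀ t ∈ Icc a b, HasDerivWithinAt (fun t => A t y) (A' t y) (Icc a b) t)
    (hcont : ∀ y : D, ContinuousOn (fun t => A' t y) (Icc a b)) (s : ℝ) :
    ∃ K, LipschitzOnWith K (fun u => compInv hclosed hmem u s) (Icc a b) :=
  exists_lipschitzOnWith_of_forall_lipschitzOnWith_apply fun z =>
    exists_lipschitzOnWith_of_hasDerivWithinAt (convex_Icc a b) isCompact_Icc
      (hderiv ⟨R s z, hmem s z⟩) (hcont _)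

theorem tendsto_compInv_nhdsWithin (hR1 : ∀ s x, A s ⟨R s x, hmem s x⟩ = x)
    (hR2 : ∀ s (y : D), R s (A s y) = y)
    (hderiv : ∀ y : D, ∀ t ∈ Icc a b, HasDerivWithinAt (fun t => A t y) (A' t y) (Icc a b) t)
    (hcont : ∀ y : D, ContinuousOn (fun t => A' t y) (Icc a b)) {s₀ : ℝ} (hs₀ : s₀ ∈ Icc a b) :
    Tendsto (fun s => compInv hclosed hmem s₀ s) (𝓝[Icc a b] s₀) (𝓝 1) := by
  obtain ⟨K, hK⟩ := exists_lipschitzOnWith_compInv hclosed hmem hderiv hcont s₀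
  have hleft : Tendsto (fun s => compInv hclosed hmem s s₀) (𝓝[Icc a b] s₀) (𝓝 1) := by
    simpa only [ContinuousWithinAt, compInv_self hclosed hmem hR1] using hK.continuousOn s₀ hs₀
  have hinv : ∀ s, compInv hclosed hmem s₀ s = Ring.inverse (compInv hclosed hmem s s₀) :=
    fun s => (Ring.inverse_unit ⟨compInv hclosed hmem s s₀, compInv hclosed hmem s₀ s,
      by rw [compInv_mul_compInv hclosed hmem hR2, compInv_self hclosed hmem hR1],
      by rw [compInv_mul_compInv hclosed hmem hR2, compInv_self hclosed hmem hR1]⟩).symm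
  simp only [hinv]
  have := (NormedRing.inverse_continuousAt (1 : (X →L[ℝ] X)ˣ)).tendsto.comp hleft
  rwa [Units.val_one, Ring.inverse_one] at this

theorem norm_deriv_apply_sub_le (hab : a < b) (hR2 : ∀ s (y : D), R s (A s y) = y)
    (hderiv : ∀ y : D, ∀ t ∈ Icc a b, HasDerivWithinAt (fun t => A t y) (A' t y) (Icc a b) t)
    {K : ℝ≥0} {s₀ : ℝ} (hK : LipschitzOnWith K (fun u => compInv hclosed hmem u s₀) (Icc a b))
    {τ : ℝ} (hτ : τ ∈ Icc a b) (s : ℝ) (x : X) :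
    ‖A' τ ⟨R s x, hmem s x⟩ - A' τ ⟨R s₀ x, hmem s₀ x⟩‖ ≤
      K * ‖compInv hclosed hmem s₀ s x - x‖ := by
  set w := compInv hclosed hmem s₀ s x - x
  have hw : HasDerivWithinAt (fun u => compInv hclosed hmem u s₀ w)
      (A' τ ⟨R s x, hmem s x⟩ - A' τ ⟨R s₀ x, hmem s₀ x⟩) (Icc a b) τ := by
    convert (hderiv ⟨R s x, hmem s x⟩ τ hτ).sub (hderiv ⟨R s₀ x, hmem s₀ x⟩ τ hτ) using 1
    ext u
    rw [map_sub, ← mul_apply_eq_comp, compInv_mul_compInv hclosed hmem hR2]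
    rfl
  have hlip : LipschitzOnWith (K * ‖w‖₊) (fun u => compInv hclosed hmem u s₀ w) (Icc a b) :=
    LipschitzOnWith.of_dist_le_mul fun u hu v hv => by
      rw [dist_eq_norm, ← sub_apply]
      calc _ ≤ ‖compInv hclosed hmem u s₀ - compInv hclosed hmem v s₀‖ * ‖w‖ :=
            ContinuousLinearMap.le_opNorm _ _
        _ ≤ K * dist u v * ‖w‖ := by
            gcongr
            rw [← dist_eq_norm]
            exact hK.dist_le_mul u hu v hv
        _ = _ := by push_cast; ring
  simpa using hw.norm_le_of_lipschitzOnWith (uniqueDiffOn_Icc hab τ hτ) hτ hlip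

end

theorem continuousOn_deriv_comp_inv_apply {X : Type*} [NormedAddCommGroup X] [NormedSpace ℝ X]
    [CompleteSpace X] {D : Submodule ℝ X} {A : ℝ → D →ₗ[ℝ] X} {R : ℝ → X →L[ℝ] X}
    {A' : ℝ → D → X} {a b : ℝ} (hab : a < b)
    (hclosed : ∀ t, IsClosed {p : X × X | ∃ h : p.1 ∈ D, A t ⟨p.1, h⟩ = p.2})
    (hmem : ∀ s x, R s x ∈ D) (hR1 : ∀ s x, A s ⟨R s x, hmem s x⟩ = x)
    (hR2 : ∀ s (y : D), R s (A s y) = y)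
    (hderiv : ∀ y : D, ∀ t ∈ Icc a b, HasDerivWithinAt (fun t => A t y) (A' t y) (Icc a b) t)
    (hcont : ∀ y : D, ContinuousOn (fun t => A' t y) (Icc a b)) (x : X) :
    ContinuousOn (fun p : ℝ × ℝ => A' p.1 ⟨R p.2 x, hmem p.2 x⟩) (Icc a b ×ˢ Icc a b) := by
  rintro ⟨τ₀, s₀⟩ ⟨hτ₀, hs₀⟩
  obtain ⟨K, hK⟩ := exists_lipschitzOnWith_compInv hclosed hmem hderiv hcont s₀
  refine continuousWithinAt_of_norm_sub_le (φ := fun s => K * ‖compInv hclosed hmem s₀ s x - x‖)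
    (fun τ hτ s _ => norm_deriv_apply_sub_le hclosed hmem hab hR2 hderiv hK hτ s x) ?_
    (hcont _ τ₀ hτ₀)
  have hx := ((ContinuousLinearMap.apply ℝ X x).continuous.tendsto 1).comp
    (tendsto_compInv_nhdsWithin hclosed hmem hR1 hR2 hderiv hcont hs₀)
  simpa using tendsto_const_nhds.mul ((hx.sub_const x).norm)

theorem stmt12_general
    {X : Type*} [NormedAddCommGroup X] [NormedSpace ℝ X] [CompleteSpace X]
    (D : Submodule ℝ X)
    (A : ℝ → D →ₗ[ℝ] X)
    (hclosed : ∀ t, IsClosed {p : X × X | ∃ h : p.1 ∈ D, A t ⟨p.1, h⟩ = p.2})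
    (R : ℝ → X →L[ℝ] X) (hmem : ∀ s x, R s x ∈ D)
    (hR1 : ∀ s x, A s ⟨R s x, hmem s x⟩ = x)
    (hR2 : ∀ s (y : D), R s (A s y) = y)
    (A' : ℝ → D → X)
    (hderiv : ∀ y : D, ∀ t ∈ Set.Icc (0:ℝ) 1,
      HasDerivWithinAt (fun t => A t y) (A' t y) (Set.Icc 0 1) t)
    (hcont : ∀ y : D, ContinuousOn (fun t => A' t y) (Set.Icc (0:ℝ) 1)) :
    ∀ x : X, ∃ F : ℝ × ℝ → X,
      ContinuousOn F (Set.Icc (0:ℝ) 1 ×ˢ Set.Icc (0:ℝ) 1) ∧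
      (∀ s ∈ Set.Icc (0:ℝ) 1, ∀ t ∈ Set.Icc (0:ℝ) 1, s ≠ t →
        F (s, t) = (t - s)⁻¹ • (A t ⟨R s x, hmem s x⟩ - x)) ∧
      (∀ t ∈ Set.Icc (0:ℝ) 1, F (t, t) = A' t ⟨R t x, hmem t x⟩) ∧
      (∃ M : ℝ, ∀ s ∈ Set.Icc (0:ℝ) 1, ∀ t ∈ Set.Icc (0:ℝ) 1, s ≠ t →
        ‖(t - s)⁻¹ • (A t ⟨R s x, hmem s x⟩ - x)‖ ≤ M) ∧
      UniformContinuousOn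
        (fun p : ℝ × ℝ => (p.2 - p.1)⁻¹ • (A p.2 ⟨R p.1 x, hmem p.1 x⟩ - x))
        {p : ℝ × ℝ | p ∈ Set.Icc (0:ℝ) 1 ×ˢ Set.Icc (0:ℝ) 1 ∧ p.1 ≠ p.2} := by
  intro x
  set g : ℝ × ℝ → X := fun p => A' p.1 ⟨R p.2 x, hmem p.2 x⟩
  have hg : ContinuousOn g (Icc 0 1 ×ˢ Icc 0 1) :=
    continuousOn_deriv_comp_inv_apply zero_lt_one hclosed hmem hR1 hR2 hderiv hcont x
  set G : ℝ × ℝ → X := fun p => g (projIcc 0 1 zero_le_one p.1, projIcc 0 1 zero_le_one p.2)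
  have hG : Continuous G :=
    hg.comp_continuous (by fun_prop) fun p =>
      ⟨(projIcc 0 1 zero_le_one p.1).2, (projIcc 0 1 zero_le_one p.2).2⟩
  have hGg : ∀ τ ∈ Icc (0 : ℝ) 1, ∀ s ∈ Icc (0 : ℝ) 1, G (τ, s) = g (τ, s) := by
    intro τ hτ s hs
    simp only [G, projIcc_of_mem _ hτ, projIcc_of_mem _ hs]
  set F : ℝ × ℝ → X := fun p => ∫ θ in (0 : ℝ)..1, G ((p.2 - p.1) * θ + p.1, p.1)
  have hF : Continuous F :=
    intervalIntegral.continuous_parametric_intervalIntegral_of_continuous' (by fun_prop) 0 1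
  have hoff : ∀ s ∈ Icc (0 : ℝ) 1, ∀ t ∈ Icc (0 : ℝ) 1, s ≠ t →
      F (s, t) = (t - s)⁻¹ • (A t ⟨R s x, hmem s x⟩ - x) := by
    intro s hs t ht hst
    have := slope_eq_integral_of_hasDerivWithinAt (f := fun u => compInv hclosed hmem u s x)
      (f' := fun τ => G (τ, s))
      (fun τ hτ => by rw [hGg τ hτ s hs]; exact hderiv ⟨R s x, hmem s x⟩ τ hτ)
      (by fun_prop : Continuous fun τ => G (τ, s)).continuousOn hs ht hst
    simp only [F]
    rw [← this, slope_def_module, compInv_apply, compInv_apply, hR1]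
  have hsq : IsCompact (Icc (0 : ℝ) 1 ×ˢ Icc (0 : ℝ) 1) := isCompact_Icc.prod isCompact_Icc
  obtain ⟨M, hM⟩ := hsq.exists_bound_of_continuousOn hF.continuousOn
  refine ⟨F, hF.continuousOn, hoff, fun t ht => ?_,
    ⟨M, fun s hs t ht hst => hoff s hs t ht hst ▸ hM _ ⟨hs, ht⟩⟩,
    ((hsq.uniformContinuousOn_of_continuous hF.continuousOn).mono fun p hp => hp.1).congr
      fun p hp => hoff p.1 hp.1.1 p.2 hp.1.2 hp.2⟩
  simp [F, hGg t ht t ht, g]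

/-- If `t ↦ A t y` is C¹ for each `y ∈ D` (with `A t⁻¹ = R t ∈ L(X)`), then for every
`x ∈ X` the map `(s,t) ↦ (t-s)⁻¹ • (A t (A s)⁻¹ x - x)` extends continuously to `[0,1]²`
with diagonal value `Ȧ t (A t)⁻¹ x`; in particular it is bounded and uniformly continuous
on the off-diagonal set. -/
theorem stmt12
    {X : Type*} [NormedAddCommGroup X] [NormedSpace ℝ X] [CompleteSpace X]
    (D : Submodule ℝ X) (hD : Dense (D : Set X))
    (A : ℝ → D →ₗ[ℝ] X)
    (hclosed : ∀ t, IsClosed {p : X × X | ∃ h : p.1 ∈ D, A t ⟨p.1, h⟩ = p.2})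
    (R : ℝ → X →L[ℝ] X) (hmem : ∀ s x, R s x ∈ D)
    (hR1 : ∀ s x, A s ⟨R s x, hmem s x⟩ = x)
    (hR2 : ∀ s (y : D), R s (A s y) = y)
    (A' : ℝ → D → X)
    (hderiv : ∀ y : D, ∀ t ∈ Set.Icc (0:ℝ) 1,
      HasDerivWithinAt (fun t => A t y) (A' t y) (Set.Icc 0 1) t)
    (hcont : ∀ y : D, ContinuousOn (fun t => A' t y) (Set.Icc (0:ℝ) 1)) :
    ∀ x : X, ∃ F : ℝ × ℝ → X,
      ContinuousOn F (Set.Icc (0:ℝ) 1 ×ˢ Set.Icc (0:ℝ) 1) ∧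
      (∀ s ∈ Set.Icc (0:ℝ) 1, ∀ t ∈ Set.Icc (0:ℝ) 1, s ≠ t →
        F (s, t) = (t - s)⁻¹ • (A t ⟨R s x, hmem s x⟩ - x)) ∧
      (∀ t ∈ Set.Icc (0:ℝ) 1, F (t, t) = A' t ⟨R t x, hmem t x⟩) ∧
      (∃ M : ℝ, ∀ s ∈ Set.Icc (0:ℝ) 1, ∀ t ∈ Set.Icc (0:ℝ) 1, s ≠ t →
        ‖(t - s)⁻¹ • (A t ⟨R s x, hmem s x⟩ - x)‖ ≤ M) ∧
      UniformContinuousOn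
        (fun p : ℝ × ℝ => (p.2 - p.1)⁻¹ • (A p.2 ⟨R p.1 x, hmem p.1 x⟩ - x))
        {p : ℝ × ℝ | p ∈ Set.Icc (0:ℝ) 1 ×ˢ Set.Icc (0:ℝ) 1 ∧ p.1 ≠ p.2} :=
  stmt12_general D A hclosed R hmem hR1 hR2 A' hderiv hcont
end

section
/- Let A(t) : D ⊂ X → X be closed with common dense domain and bounded inverses. Assume (i) (s,t) ↦ (1/(t−s))·C(t,s)x is bounded and uniformly continuous on {s ≠ t} ⊂ [0,1]² for all x ∈ X, where C(t,s) := A(t)A(s)⁻¹ − 1, and (ii) C(t)x := lim_{k→∞} k·C(t, t−1/k)x exists uniformly in t ∈ (0,1] for all x ∈ X. Then for every x ∈ D the map t ↦ A(t)x is continuously differentiable on [0,1] with derivative C(t)A(t)x. -/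
/-!
Put `B(s, t) = (t - s)⁻¹ (A(t) A(s)⁻¹ - 1)`. Each `A(t) A(s)⁻¹` is bounded by the closed graph
theorem, so hypothesis (i) and Banach–Steinhaus bound `‖B(s, t)‖` uniformly off the diagonal, and
uniform continuity of `B(·) x` lets it extend continuously to the diagonal. This produces
uniformly bounded, strongly continuous operators `Ψ(t)`. Since `B(t, u) A(t) y` is the difference
quotient of `u ↦ A(u) y` at `t`, its limit `Ψ(t) A(t) y` is the derivative; it is continuous in `t`
because `Ψ` is bounded and strongly continuous and `t ↦ A(t) y` is continuous. Approaching the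
diagonal along `s = t - 1/k` identifies `Ψ(t)` with `C(t)` through (ii).
-/

open Filter Topology Set

theorem UniformContinuousOn.exists_tendsto_nhdsWithin {α Y : Type*} [UniformSpace α]
    [UniformSpace Y] [CompleteSpace Y] {S : Set α} {f : α → Y} (hf : UniformContinuousOn f S)
    {q : α} (hq : q ∈ closure S) : ∃ L, Tendsto f (𝓝[S] q) (𝓝 L) := by
  have : (𝓝[S] q).NeBot := mem_closure_iff_nhdsWithin_neBot.1 hq
  have hcau : Cauchy (𝓝[S] q) := cauchy_nhds.mono nhdsWithin_le_nhds
  refine CompleteSpace.complete ⟨inferInstance, ?_⟩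
  rw [Filter.prod_map_map_eq]
  exact hf.mono_left (le_inf hcau.2
    (le_principal_iff.2 (prod_mem_prod self_mem_nhdsWithin self_mem_nhdsWithin)))

theorem continuousOn_of_tendsto_nhdsWithin {α β Y : Type*} [TopologicalSpace α]
    [TopologicalSpace β] [TopologicalSpace Y] [T3Space Y] {S : Set α} {f : α → Y}
    {g : β → α} {T : Set β} {h : β → Y} (hg : ContinuousOn g T) (hgS : MapsTo g T (closure S))
    (hh : ∀ b ∈ T, Tendsto f (𝓝[S] (g b)) (𝓝 (h b))) : ContinuousOn h T := by
  have hext : EqOn (extendFrom S f ∘ g) h T := fun b hb =>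
    extendFrom_eq (hgS hb) (hh b hb)
  refine ContinuousOn.congr ?_ hext.symm
  exact (continuousOn_extendFrom (image_subset_iff.2 hgS)
    (forall_mem_image.2 fun b hb => ⟨_, hh b hb⟩)).comp hg (mapsTo_image g T)

section OffDiag

variable {α : Type*} [TopologicalSpace α] {s : Set α} {t : α}

theorem tendsto_prodMk_left_nhdsWithin_offDiag (ht : t ∈ s) :
    Tendsto (fun u => (t, u)) (𝓝[s \ {t}] t) (𝓝[s.offDiag] (t, t)) :=
  tendsto_nhdsWithin_iff.2
    ⟨(Continuous.prodMk_right t).continuousWithinAt,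
      eventually_nhdsWithin_of_forall fun _ hu => ⟨ht, hu.1, Ne.symm hu.2⟩⟩

theorem tendsto_prodMk_right_nhdsWithin_offDiag (ht : t ∈ s) :
    Tendsto (fun u => (u, t)) (𝓝[s \ {t}] t) (𝓝[s.offDiag] (t, t)) :=
  tendsto_nhdsWithin_iff.2
    ⟨(Continuous.prodMk_left t).continuousWithinAt,
      eventually_nhdsWithin_of_forall fun _ hu => ⟨hu.1, ht, hu.2⟩⟩

theorem Preperfect.diag_mem_closure_offDiag (hs : Preperfect s) (ht : t ∈ s) :
    (t, t) ∈ closure s.offDiag := by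
  have := accPt_principal_iff_nhdsWithin.1 (hs t ht)
  have hlim := tendsto_prodMk_left_nhdsWithin_offDiag ht
  exact mem_closure_of_tendsto (hlim.mono_right nhdsWithin_le_nhds)
    (hlim.eventually self_mem_nhdsWithin)

end OffDiag

theorem preperfect_Icc {a b : ℝ} (hab : a < b) : Preperfect (Icc a b) := fun t ht =>
  (uniqueDiffOn_Icc hab t ht).accPt

section Operators

variable {𝕜 E F G : Type*} [NontriviallyNormedField 𝕜]
  [NormedAddCommGroup E] [NormedSpace 𝕜 E] [NormedAddCommGroup F] [NormedSpace 𝕜 F]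
  [NormedAddCommGroup G] [NormedSpace 𝕜 G]

theorem LinearMap.continuous_comp_codRestrict_of_isClosed_graph [CompleteSpace E]
    [CompleteSpace G] {D : Submodule 𝕜 F} {A : D →ₗ[𝕜] G}
    (hA : IsClosed {p : F × G | ∃ h : p.1 ∈ D, A ⟨p.1, h⟩ = p.2})
    (R : E →L[𝕜] F) (hR : ∀ x, R x ∈ D) :
    Continuous (A.comp ((R : E →ₗ[𝕜] F).codRestrict D hR)) := by
  refine LinearMap.continuous_of_isClosed_graph _ ?_
  convert hA.preimage ((R.continuous.comp continuous_fst).prodMk continuous_snd) using 1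
  ext ⟨x, z⟩
  exact ⟨fun h => ⟨hR x, h.symm⟩, fun ⟨_, h⟩ => h.symm⟩

theorem ContinuousLinearMap.exists_tendsto_of_norm_le {ι : Type*} {l : Filter ι} [l.NeBot]
    [CompleteSpace F] {B : ι → E →L[𝕜] F} {M : ℝ} (hBM : ∀ᶠ i in l, ‖B i‖ ≤ M)
    (hlim : ∀ x, ∃ y, Tendsto (fun i => B i x) l (𝓝 y)) :
    ∃ T : E →L[𝕜] F, ‖T‖ ≤ M ∧ ∀ x, Tendsto (fun i => B i x) l (𝓝 (T x)) := by
  choose f hf using hlim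
  let T₀ : E →ₗ[𝕜] F := linearMapOfTendsto f (fun i => (B i : E →ₗ[𝕜] F)) (tendsto_pi_nhds.2 hf)
  have hT₀ : ∀ x, ‖T₀ x‖ ≤ M * ‖x‖ := fun x =>
    le_of_tendsto (hf x).norm (hBM.mono fun i hi => (B i).le_of_opNorm_le hi x)
  have hM : 0 ≤ M := let ⟨_, hi⟩ := hBM.exists; (norm_nonneg _).trans hi
  exact ⟨T₀.mkContinuous M hT₀, LinearMap.mkContinuous_norm_le _ hM _, hf⟩

theorem ContinuousOn.clm_apply_of_norm_le {α : Type*} [TopologicalSpace α] {s : Set α}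
    {T : α → E →L[𝕜] F} {M : ℝ} (hTM : ∀ t ∈ s, ‖T t‖ ≤ M)
    (hT : ∀ x, ContinuousOn (fun t => T t x) s) {f : α → E} (hf : ContinuousOn f s) :
    ContinuousOn (fun t => T t (f t)) s := by
  intro t₀ ht₀
  have hdiff : Tendsto (fun t => T t (f t - f t₀)) (𝓝[s] t₀) (𝓝 0) := by
    refine squeeze_zero_norm' (eventually_nhdsWithin_of_forall fun t ht =>
      (T t).le_of_opNorm_le (hTM t ht) _) ?_
    simpa using (((hf t₀ ht₀).sub_const (f t₀)).norm.const_mul M)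
  simpa [ContinuousWithinAt] using Tendsto.add (hT (f t₀) t₀ ht₀) hdiff

theorem exists_clm_tendsto_nhdsWithin_offDiag {α : Type*} [UniformSpace α] {s : Set α}
    (hs : Preperfect s) [CompleteSpace E] [CompleteSpace F] {B : α × α → E →L[𝕜] F}
    (hbdd : ∀ x, ∃ M, ∀ p ∈ s.offDiag, ‖B p x‖ ≤ M)
    (hunif : ∀ x, UniformContinuousOn (fun p => B p x) s.offDiag) :
    ∃ Ψ : α → E →L[𝕜] F, ∃ M, (∀ τ ∈ s, ‖Ψ τ‖ ≤ M) ∧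
      (∀ τ ∈ s, ∀ x, Tendsto (fun p => B p x) (𝓝[s.offDiag] (τ, τ)) (𝓝 (Ψ τ x))) ∧
      ∀ x, ContinuousOn (fun τ => Ψ τ x) s := by
  obtain ⟨M, hM⟩ := banach_steinhaus (g := fun p : s.offDiag => B p) fun x =>
    let ⟨C, hC⟩ := hbdd x; ⟨C, fun p => hC p p.2⟩
  have hlim : ∀ τ ∈ s, ∃ T : E →L[𝕜] F, ‖T‖ ≤ M ∧
      ∀ x, Tendsto (fun p => B p x) (𝓝[s.offDiag] (τ, τ)) (𝓝 (T x)) := fun τ hτ => by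
    have hcl := hs.diag_mem_closure_offDiag hτ
    have := mem_closure_iff_nhdsWithin_neBot.1 hcl
    exact ContinuousLinearMap.exists_tendsto_of_norm_le
      (eventually_nhdsWithin_of_forall fun p hp => hM ⟨p, hp⟩)
      fun x => (hunif x).exists_tendsto_nhdsWithin hcl
  choose! Ψ hΨM hΨlim using hlim
  refine ⟨Ψ, M, hΨM, hΨlim, fun x => ?_⟩
  exact continuousOn_of_tendsto_nhdsWithin (g := fun τ => (τ, τ))
    (continuous_id.prodMk continuous_id).continuousOn
    (fun τ hτ => hs.diag_mem_closure_offDiag hτ) fun τ hτ => hΨlim τ hτ x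

end Operators

theorem hasDerivWithinAt_of_slope_eq {F : Type*} [NormedAddCommGroup F] [NormedSpace ℝ F]
    {f : ℝ → F} {g : ℝ × ℝ → F} {s : Set ℝ} {t : ℝ} {L : F} (ht : t ∈ s)
    (hslope : ∀ u ∈ s \ {t}, slope f t u = g (t, u))
    (hg : Tendsto g (𝓝[s.offDiag] (t, t)) (𝓝 L)) : HasDerivWithinAt f L s t := by
  rw [hasDerivWithinAt_iff_tendsto_slope]
  exact (hg.comp (tendsto_prodMk_left_nhdsWithin_offDiag ht)).congr'
    (eventually_nhdsWithin_of_forall fun u hu => (hslope u hu).symm)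

theorem tendsto_sub_inv_natCast_nhdsLT (t : ℝ) :
    Tendsto (fun k : ℕ => t - (k : ℝ)⁻¹) atTop (𝓝[<] t) :=
  tendsto_nhdsWithin_iff.2
    ⟨by simpa using tendsto_const_nhds.sub (tendsto_inv_atTop_nhds_zero_nat (𝕜 := ℝ)),
      (eventually_gt_atTop 0).mono fun k hk => sub_lt_self t (by positivity)⟩

theorem tendsto_sub_inv_natCast_prodMk_nhdsWithin_offDiag {t : ℝ} (ht : t ∈ Ioc (0 : ℝ) 1) :
    Tendsto (fun k : ℕ => (t - (k : ℝ)⁻¹, t)) atTop (𝓝[(Icc (0 : ℝ) 1).offDiag] (t, t)) := by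
  have hlt : 𝓝[<] t ≤ 𝓝[Icc 0 1 \ {t}] t := nhdsWithin_le_iff.2 <|
    mem_of_superset (Ioo_mem_nhdsLT ht.1) fun u hu => ⟨⟨hu.1.le, hu.2.le.trans ht.2⟩, hu.2.ne⟩
  exact (tendsto_prodMk_right_nhdsWithin_offDiag (Ioc_subset_Icc_self ht)).comp
    ((tendsto_sub_inv_natCast_nhdsLT t).mono_right hlt)

theorem tendsto_of_norm_sub_le_on_Icc_inv {X : Type*} [NormedAddCommGroup X]
    {F : ℕ → ℝ → X} {G : ℝ → X}
    (h : ∀ ε > 0, ∃ K : ℕ, ∀ k ≥ K, ∀ t ∈ Icc ((k : ℝ)⁻¹) 1, ‖F k t - G t‖ ≤ ε)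
    {t : ℝ} (ht : t ∈ Ioc (0 : ℝ) 1) : Tendsto (fun k => F k t) atTop (𝓝 (G t)) := by
  refine Metric.tendsto_atTop.2 fun ε hε => ?_
  obtain ⟨K, hK⟩ := h (ε / 2) (half_pos hε)
  obtain ⟨K', hK'⟩ := exists_nat_gt t⁻¹
  refine ⟨max K K', fun k hk => ?_⟩
  have hkt : (k : ℝ)⁻¹ ≤ t :=
    inv_le_of_inv_le₀ ht.1 (hK'.le.trans (by exact_mod_cast le_of_max_le_right hk))
  rw [dist_eq_norm]
  exact (hK k (le_of_max_le_left hk) t ⟨hkt, ht.2⟩).trans_lt (half_lt_self hε)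

theorem stmt14_general
    {X : Type*} [NormedAddCommGroup X] [NormedSpace ℝ X] [CompleteSpace X]
    (D : Submodule ℝ X)
    (A : ℝ → D →ₗ[ℝ] X)
    (hclosed : ∀ t, IsClosed {p : X × X | ∃ h : p.1 ∈ D, A t ⟨p.1, h⟩ = p.2})
    (R : ℝ → X →L[ℝ] X) (hmem : ∀ s x, R s x ∈ D)
    (hR2 : ∀ s (y : D), R s (A s y) = y)
    (Cop : ℝ → X → X)
    (hbdd : ∀ x : X, ∃ M : ℝ, ∀ s ∈ Set.Icc (0:ℝ) 1, ∀ t ∈ Set.Icc (0:ℝ) 1, s ≠ t →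
      ‖(t - s)⁻¹ • (A t ⟨R s x, hmem s x⟩ - x)‖ ≤ M)
    (hunif : ∀ x : X, UniformContinuousOn
      (fun p : ℝ × ℝ => (p.2 - p.1)⁻¹ • (A p.2 ⟨R p.1 x, hmem p.1 x⟩ - x))
      {p : ℝ × ℝ | p ∈ Set.Icc (0:ℝ) 1 ×ˢ Set.Icc (0:ℝ) 1 ∧ p.1 ≠ p.2})
    (hconv : ∀ x : X, ∀ ε > (0:ℝ), ∃ K : ℕ, ∀ k ≥ K, ∀ t ∈ Set.Icc ((k:ℝ)⁻¹) 1,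
      ‖(k:ℝ) • (A t ⟨R (t - (k:ℝ)⁻¹) x, hmem (t - (k:ℝ)⁻¹) x⟩ - x) - Cop t x‖ ≤ ε) :
    ∀ y : D, ∃ g : ℝ → X,
      (∀ t ∈ Set.Icc (0:ℝ) 1, HasDerivWithinAt (fun t => A t y) (g t) (Set.Icc 0 1) t) ∧
      ContinuousOn g (Set.Icc (0:ℝ) 1) ∧
      (∀ t ∈ Set.Ioc (0:ℝ) 1, g t = Cop t (A t y)) := by
  intro y
  let B : ℝ × ℝ → X →L[ℝ] X := fun p => (p.2 - p.1)⁻¹ •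
    (⟨(A p.2).comp ((R p.1 : X →ₗ[ℝ] X).codRestrict D (hmem p.1)),
      LinearMap.continuous_comp_codRestrict_of_isClosed_graph (hclosed p.2) _ _⟩ - 1)
  have hB : ∀ p x, B p x = (p.2 - p.1)⁻¹ • (A p.2 ⟨R p.1 x, hmem p.1 x⟩ - x) := fun _ _ => rfl
  have hS : {p : ℝ × ℝ | p ∈ Icc (0:ℝ) 1 ×ˢ Icc (0:ℝ) 1 ∧ p.1 ≠ p.2} = (Icc (0:ℝ) 1).offDiag :=
    Set.ext fun _ => and_assoc
  obtain ⟨Ψ, M, hΨM, hΨlim, hΨcont⟩ := exists_clm_tendsto_nhdsWithin_offDiag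
    (preperfect_Icc zero_lt_one) (B := B)
    (fun x => let ⟨M, hM⟩ := hbdd x; ⟨M, fun p hp => hM _ hp.1 _ hp.2.1 hp.2.2⟩)
    (fun x => hS ▸ hunif x)
  have hderiv : ∀ t ∈ Icc (0:ℝ) 1,
      HasDerivWithinAt (fun t => (A t y : X)) (Ψ t (A t y)) (Icc 0 1) t := fun t ht =>
    hasDerivWithinAt_of_slope_eq ht
      (fun u _ => by simp only [hB, slope_def_module, hR2, Subtype.coe_eta]) (hΨlim t ht _)
  refine ⟨fun t => Ψ t (A t y), hderiv,
    ContinuousOn.clm_apply_of_norm_le hΨM hΨcont fun t ht => (hderiv t ht).continuousWithinAt,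
    fun t ht => ?_⟩
  refine tendsto_nhds_unique ((hΨlim t (Ioc_subset_Icc_self ht) _).comp
    (tendsto_sub_inv_natCast_prodMk_nhdsWithin_offDiag ht)) ?_
  simpa only [Function.comp_def, hB, sub_sub_cancel, inv_inv] using
    tendsto_of_norm_sub_le_on_Icc_inv (hconv (A t y)) ht

/-- Main theorem (Yosida ⇒ C¹): if (i) `(s,t) ↦ (t-s)⁻¹ • C(t,s)x` is bounded and
uniformly continuous on the off-diagonal of `[0,1]²` for every `x`, and (ii)
`C(t)x = lim_k k • C(t, t-1/k)x` exists uniformly in `t ∈ (0,1]`, then for every `y ∈ D`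
the map `t ↦ A t y` is continuously differentiable on `[0,1]`, with derivative
`C(t)(A t y)` on `(0,1]`. Here `C(t,s)x = A t (A s)⁻¹ x - x`. -/
theorem stmt14
    {X : Type*} [NormedAddCommGroup X] [NormedSpace ℝ X] [CompleteSpace X]
    (D : Submodule ℝ X) (hD : Dense (D : Set X))
    (A : ℝ → D →ₗ[ℝ] X)
    (hclosed : ∀ t, IsClosed {p : X × X | ∃ h : p.1 ∈ D, A t ⟨p.1, h⟩ = p.2})
    (R : ℝ → X →L[ℝ] X) (hmem : ∀ s x, R s x ∈ D)
    (hR1 : ∀ s x, A s ⟨R s x, hmem s x⟩ = x)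
    (hR2 : ∀ s (y : D), R s (A s y) = y)
    (Cop : ℝ → X → X)
    (hbdd : ∀ x : X, ∃ M : ℝ, ∀ s ∈ Set.Icc (0:ℝ) 1, ∀ t ∈ Set.Icc (0:ℝ) 1, s ≠ t →
      ‖(t - s)⁻¹ • (A t ⟨R s x, hmem s x⟩ - x)‖ ≤ M)
    (hunif : ∀ x : X, UniformContinuousOn
      (fun p : ℝ × ℝ => (p.2 - p.1)⁻¹ • (A p.2 ⟨R p.1 x, hmem p.1 x⟩ - x))
      {p : ℝ × ℝ | p ∈ Set.Icc (0:ℝ) 1 ×ˢ Set.Icc (0:ℝ) 1 ∧ p.1 ≠ p.2})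
    (hconv : ∀ x : X, ∀ ε > (0:ℝ), ∃ K : ℕ, ∀ k ≥ K, ∀ t ∈ Set.Icc ((k:ℝ)⁻¹) 1,
      ‖(k:ℝ) • (A t ⟨R (t - (k:ℝ)⁻¹) x, hmem (t - (k:ℝ)⁻¹) x⟩ - x) - Cop t x‖ ≤ ε) :
    ∀ y : D, ∃ g : ℝ → X,
      (∀ t ∈ Set.Icc (0:ℝ) 1, HasDerivWithinAt (fun t => A t y) (g t) (Set.Icc 0 1) t) ∧
      ContinuousOn g (Set.Icc (0:ℝ) 1) ∧
      (∀ t ∈ Set.Ioc (0:ℝ) 1, g t = Cop t (A t y)) :=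
  stmt14_general D A hclosed R hmem hR2 Cop hbdd hunif hconv
end
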